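/- arXiv:2205.01645 — 6 statements merged into one kernel-verified Lean document; each statement's English description precedes it below -/
import Mathlib

section
/- Let π = (d_1,…,d_n) be a non-increasing graphic sequence and define the complementary sequence π̄ = (n−1−d_n, n−1−d_{n−1}, …, n−1−d_1). Let m(π) = max{ i : d_i ≥ i−1 }. Then m(π) + m(π̄) = n+1 if d_{m(π)} = m(π) − 1, and m(π) + m(π̄) = n otherwise. -/
open SimpleGraph

attribute [local instance] Classical.propDecidable

/-!
Write `S = {k ∈ [1, n] : d k < k}`. Since `d k ≤ n - 1`, the complementary sequence satisfies
`π̄_i ≥ i - 1` iff `n + 1 - i ∉ S`, so `n + 1 - m(π̄) = min S`. As `d k - k` strictly decreases,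
`min S = m` when `d m = m - 1`, and `min S = m + 1` when `d m ≥ m`.
-/

def modDurfeeSet (n : ℕ) (d : ℕ → ℕ) : Set ℕ := {i | 1 ≤ i ∧ i ≤ n ∧ i - 1 ≤ d i}

def deficientSet (n : ℕ) (d : ℕ → ℕ) : Set ℕ := {k | 1 ≤ k ∧ k ≤ n ∧ d k < k}

def complSeq (n : ℕ) (d : ℕ → ℕ) (i : ℕ) : ℕ := n - 1 - d (n + 1 - i)

lemma degree_seq_lt {n : ℕ} {d : ℕ → ℕ} (G : SimpleGraph (Fin n))
    (hG : ∀ i : Fin n, G.degree i = d (i.1 + 1)) {k : ℕ} (hk : 1 ≤ k) (hkn : k ≤ n) :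
    d k < n := by
  have hlt := G.degree_lt_card_verts ⟨k - 1, by omega⟩
  rw [hG, Fintype.card_fin, Nat.sub_add_cancel hk] at hlt
  exact hlt

section

variable {n : ℕ} {d : ℕ → ℕ}

lemma isLeast_deficientSet_of_isGreatest_compl (hd : ∀ k, 1 ≤ k → k ≤ n → d k < n)
    {mbar : ℕ} (hmbar : IsGreatest (modDurfeeSet n (complSeq n d)) mbar) :
    IsLeast (deficientSet n d) (n + 1 - mbar) := by
  obtain ⟨⟨hb1, hbn, hbd⟩, hmax⟩ := hmbar
  unfold complSeq at hbd
  refine ⟨⟨by omega, by omega, ?_⟩, fun k ⟨hk1, hkn, hdk⟩ => ?_⟩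
  · have := hd (n + 1 - mbar) (by omega) (by omega)
    omega
  · have hmem : n + 1 - k ∈ modDurfeeSet n (complSeq n d) := by
      refine ⟨by omega, by omega, ?_⟩
      rw [complSeq, show n + 1 - (n + 1 - k) = k by omega]
      omega
    have := hmax hmem
    omega

variable (hdec : ∀ i j, 1 ≤ i → i ≤ j → j ≤ n → d j ≤ d i)
include hdec

lemma isLeast_deficientSet_of_eq {m : ℕ} (hm1 : 1 ≤ m) (hmn : m ≤ n) (hdm : d m = m - 1) :
    IsLeast (deficientSet n d) m := by
  refine ⟨⟨hm1, hmn, by omega⟩, fun k ⟨hk1, _, hdk⟩ => ?_⟩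
  by_contra! hkm
  have := hdec k m hk1 hkm.le hmn
  omega

lemma isLeast_deficientSet_of_le (hd : ∀ k, 1 ≤ k → k ≤ n → d k < n) {m : ℕ}
    (hm : IsGreatest (modDurfeeSet n d) m) (hdm : m ≤ d m) :
    IsLeast (deficientSet n d) (m + 1) := by
  obtain ⟨⟨hm1, hmn, -⟩, hmax⟩ := hm
  have hmlt : m < n := by
    have := hd m hm1 hmn
    omega
  refine ⟨⟨by omega, hmlt, ?_⟩, fun k ⟨hk1, _, hdk⟩ => ?_⟩
  · by_contra! hle
    have := @hmax (m + 1) ⟨by omega, hmlt, by omega⟩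
    omega
  · by_contra! hkm
    have := hdec k m hk1 (by omega) hmn
    omega

end

theorem durfee_complement_general
    (n : ℕ) (d : ℕ → ℕ)
    (hdec : ∀ i j, 1 ≤ i → i ≤ j → j ≤ n → d j ≤ d i)
    (hgraphic : ∃ G : SimpleGraph (Fin n), ∀ i : Fin n, G.degree i = d (i.1 + 1))
    (m mbar : ℕ)
    -- `m` is the modified Durfee number of `π`: the largest `i ∈ [1,n]` with `d i ≥ i - 1`
    (hm : 1 ≤ m ∧ m ≤ n ∧ m - 1 ≤ d m ∧
      ∀ i, 1 ≤ i → i ≤ n → i - 1 ≤ d i → i ≤ m)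
    -- `mbar` is the modified Durfee number of the complementary sequence
    -- `π̄_i = n - 1 - d (n + 1 - i)`
    (hmbar : 1 ≤ mbar ∧ mbar ≤ n ∧ mbar - 1 ≤ n - 1 - d (n + 1 - mbar) ∧
      ∀ i, 1 ≤ i → i ≤ n → i - 1 ≤ n - 1 - d (n + 1 - i) → i ≤ mbar) :
    if d m = m - 1 then m + mbar = n + 1 else m + mbar = n := by
  obtain ⟨G, hG⟩ := hgraphic
  have hd : ∀ k, 1 ≤ k → k ≤ n → d k < n := fun k => degree_seq_lt G hG
  have hmG : IsGreatest (modDurfeeSet n d) m :=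
    ⟨⟨hm.1, hm.2.1, hm.2.2.1⟩, fun i ⟨h1, h2, h3⟩ => hm.2.2.2 i h1 h2 h3⟩
  have hmbarG : IsGreatest (modDurfeeSet n (complSeq n d)) mbar :=
    ⟨⟨hmbar.1, hmbar.2.1, hmbar.2.2.1⟩, fun i ⟨h1, h2, h3⟩ => hmbar.2.2.2 i h1 h2 h3⟩
  have hleast := isLeast_deficientSet_of_isGreatest_compl hd hmbarG
  split_ifs with hdm
  · have := (isLeast_deficientSet_of_eq hdec hm.1 hm.2.1 hdm).unique hleast
    omega
  · have := (isLeast_deficientSet_of_le hdec hd hmG (by omega)).unique hleast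
    omega

theorem durfee_complement
    (n : ℕ) (hn : 0 < n) (d : ℕ → ℕ)
    (hdec : ∀ i j, 1 ≤ i → i ≤ j → j ≤ n → d j ≤ d i)
    (hgraphic : ∃ G : SimpleGraph (Fin n), ∀ i : Fin n, G.degree i = d (i.1 + 1))
    (m mbar : ℕ)
    -- `m` is the modified Durfee number of `π`: the largest `i ∈ [1,n]` with `d i ≥ i - 1`
    (hm : 1 ≤ m ∧ m ≤ n ∧ m - 1 ≤ d m ∧
      ∀ i, 1 ≤ i → i ≤ n → i - 1 ≤ d i → i ≤ m)
    -- `mbar` is the modified Durfee number of the complementary sequence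
    -- `π̄_i = n - 1 - d (n + 1 - i)`
    (hmbar : 1 ≤ mbar ∧ mbar ≤ n ∧ mbar - 1 ≤ n - 1 - d (n + 1 - mbar) ∧
      ∀ i, 1 ≤ i → i ≤ n → i - 1 ≤ n - 1 - d (n + 1 - i) → i ≤ mbar) :
    if d m = m - 1 then m + mbar = n + 1 else m + mbar = n :=
  durfee_complement_general n d hdec hgraphic m mbar hm hmbar
end

section
/- Let π = (d_1,…,d_n) be non-increasing with 0 ≤ k ≤ d_n such that D_k(π) = (d_1−k,…,d_n−k) is graphic, and let the complement of D_k(π) be the non-increasing sequence (q̄_1,…,q̄_n) with q̄_i = n−1−d_{n+1−i}+k. Let π̄ = (n−1−d_n,…,n−1−d_1) and m(σ) = max{i : σ_i ≥ i−1} for a non-increasing sequence σ. Then m(π̄) ≤ m(complement of D_k(π)) ≤ m(π̄) + k. -/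
open SimpleGraph

attribute [local instance] Classical.propDecidable

/-- `G` realizes the (1-indexed) degree sequence `d 1, …, d n`. -/
def Realizes {n : ℕ} (G : SimpleGraph (Fin n)) (d : ℕ → ℤ) : Prop :=
  ∀ i : Fin n, (G.degree i : ℤ) = d (i.1 + 1)

/-- The sequence `d 1, …, d n` is graphic. -/
def Graphic (n : ℕ) (d : ℕ → ℤ) : Prop :=
  ∃ G : SimpleGraph (Fin n), Realizes G d

theorem durfee_complement_Dk
    (n k : ℕ) (d : ℕ → ℤ) (hn : 0 < n)
    (hdec : ∀ i j, 1 ≤ i → i ≤ j → j ≤ n → d j ≤ d i)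
    (hkd : (k : ℤ) ≤ d n)
    (hDk : Graphic n (fun i => d i - k))
    (mbar mq : ℕ)
    -- `mbar` is the modified Durfee number of `π̄`, where `π̄_i = n - 1 - d (n + 1 - i)`
    (hmbar : 1 ≤ mbar ∧ mbar ≤ n ∧
      (mbar : ℤ) - 1 ≤ (n : ℤ) - 1 - d (n + 1 - mbar) ∧
      ∀ i, 1 ≤ i → i ≤ n → (i : ℤ) - 1 ≤ (n : ℤ) - 1 - d (n + 1 - i) → i ≤ mbar)
    -- `mq` is the modified Durfee number of the complement of `D_k(π)`, whose
    -- entries are `q̄_i = n - 1 - d (n + 1 - i) + k`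
    (hmq : 1 ≤ mq ∧ mq ≤ n ∧
      (mq : ℤ) - 1 ≤ (n : ℤ) - 1 - d (n + 1 - mq) + k ∧
      ∀ i, 1 ≤ i → i ≤ n → (i : ℤ) - 1 ≤ (n : ℤ) - 1 - d (n + 1 - i) + k → i ≤ mq) :
    mbar ≤ mq ∧ mq ≤ mbar + k := by
  obtain ⟨hb1, hbn, hbineq, hbmax⟩ := hmbar
  obtain ⟨hq1, hqn, hqineq, hqmax⟩ := hmq
  constructor
  · exact hqmax mbar hb1 hbn (by push_cast; omega)
  · by_cases hk : mq ≤ k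
    · omega
    · push_neg at hk
      have h1 : 1 ≤ mq - k := by omega
      have hcast : ((mq - k : ℕ) : ℤ) = (mq : ℤ) - k := by omega
      have hd : d (n + 1 - (mq - k)) ≤ d (n + 1 - mq) :=
        hdec (n + 1 - mq) (n + 1 - (mq - k)) (by omega) (by omega) (by omega)
      have : mq - k ≤ mbar := by
        apply hbmax (mq - k) h1 (by omega)
        rw [hcast]
        omega
      omega
end

section
/- Let π = (d_1,…,d_n) be non-increasing with 1 ≤ k ≤ d_n and n even. Suppose m(π) ≤ d_1 − d_n + k − 1 and m(τ) ≤ d_1 − d_n + k − 1, where τ = (q̄_1,…,q̄_n) with q̄_i = n − 1 − d_{n+1−i} + k is the complement of D_k(π), and suppose π is graphic. Then d_1 ≥ n/2 + d_n − k + 1. (Equivalently, if d_1 ≤ n/2 + d_n − k then m(π) ≥ d_1−d_n+k or m(τ) ≥ q̄_1−q̄_n+k, using q̄_1−q̄_n = d_1−d_n.) -/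
open SimpleGraph

attribute [local instance] Classical.propDecidable

theorem durfee_bound_forces_large_d1
    (n k : ℕ) (d : ℕ → ℤ)
    (hn : Even n) (hn0 : 0 < n)
    (hdec : ∀ i j, 1 ≤ i → i ≤ j → j ≤ n → d j ≤ d i)
    (hpos : ∀ i, 1 ≤ i → i ≤ n → 1 ≤ d i)
    (hk : 1 ≤ k) (hkd : (k : ℤ) ≤ d n)
    (hgraphic : Graphic n d)
    (m mt : ℕ)
    -- `m` is the modified Durfee number of `π`
    (hm : 1 ≤ m ∧ m ≤ n ∧ (m : ℤ) - 1 ≤ d m ∧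
      ∀ i, 1 ≤ i → i ≤ n → (i : ℤ) - 1 ≤ d i → i ≤ m)
    -- `mt` is the modified Durfee number of `τ`, the complement of `D_k(π)`,
    -- with entries `q̄_i = n - 1 - d (n + 1 - i) + k`
    (hmt : 1 ≤ mt ∧ mt ≤ n ∧
      (mt : ℤ) - 1 ≤ (n : ℤ) - 1 - d (n + 1 - mt) + k ∧
      ∀ i, 1 ≤ i → i ≤ n → (i : ℤ) - 1 ≤ (n : ℤ) - 1 - d (n + 1 - i) + k → i ≤ mt)
    (h1 : (m : ℤ) ≤ d 1 - d n + k - 1)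
    (h2 : (mt : ℤ) ≤ d 1 - d n + k - 1) :
    d 1 ≥ (n : ℤ) / 2 + d n - k + 1 := by
  obtain ⟨hm1, hmn, hmd, hmmax⟩ := hm
  obtain ⟨hmt1, hmtn, hmtd, hmtmax⟩ := hmt
  have hk' : (1 : ℤ) ≤ (k : ℤ) := by exact_mod_cast hk
  have key : n ≤ m + mt := by
    by_contra h
    push_neg at h
    have h3 : ¬ (((m + 1 : ℕ) : ℤ) - 1 ≤ d (m + 1)) := by
      intro hle
      have := hmmax (m + 1) (by omega) (by omega) hle
      omega
    have h4 : ¬ (((mt + 1 : ℕ) : ℤ) - 1 ≤ (n : ℤ) - 1 - d (n + 1 - (mt + 1)) + k) := by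
      intro hle
      have := hmtmax (mt + 1) (by omega) (by omega) hle
      omega
    push_neg at h3 h4
    have heq : n + 1 - (mt + 1) = n - mt := by omega
    rw [heq] at h4
    have hmono := hdec (m + 1) (n - mt) (by omega) (by omega) (by omega)
    have hc : ((m : ℤ) + mt) + 1 ≤ (n : ℤ) := by exact_mod_cast h
    push_cast at h3 h4
    linarith
  have hc2 : (n : ℤ) ≤ (m : ℤ) + mt := by exact_mod_cast key
  obtain ⟨t, ht⟩ := hn
  have hnt : (n : ℤ) = 2 * t := by push_cast [ht]; ring
  have : (n : ℤ) / 2 = t := by omega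
  linarith
end

section
/- Color the edges of the complete graph K_n with colors 1,…,t, giving spanning subgraphs H_1,…,H_t (H_j consists of the edges colored j), such that H_j is regular for every j ≥ 3. Fix vertices u, v and an edge v x_0 ∈ E(H_1) with x_0 u ∉ E(H_1). If there exists any exchange for (v x_0, x_0 u) — i.e., a list of 2l distinct edges (v x_0, x_0 u, v x_1, x_1 u, …, v x_{l−1}, x_{l−1} u) such that x_i u and v x_{i+1} have the same color for all i modulo l — then there exists a simplified exchange L' for (v x_0, x_0 u) with X(L') ⊆ X(L), where an exchange is simplified if for each color class H_i at most one x_j ∈ X(L') has v x_j ∈ E(H_i), and X(L) denotes {x_0,…,x_{l−1}}. -/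
open SimpleGraph

attribute [local instance] Classical.propDecidable

/-- The spanning subgraph of `K_n` consisting of the edges with color `j`
under the edge coloring `c`. -/
def Hc {n : ℕ} (c : Sym2 (Fin n) → ℕ) (j : ℕ) : SimpleGraph (Fin n) where
  Adj x y := x ≠ y ∧ c s(x, y) = j
  symm := by
    constructor
    rintro x y ⟨h1, h2⟩
    exact ⟨h1.symm, by rwa [Sym2.eq_swap]⟩
  loopless := by constructor; rintro x ⟨h, -⟩; exact h rfl

/-- An exchange for the edges `v x₀` and `x₀ u` (with `x₀ = x 0`): a cyclic list of
`2l` distinct edges `(v x₀, x₀ u, v x₁, x₁ u, …, v x_{l-1}, x_{l-1} u)` such that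
`x_i u` and `v x_{i+1}` have the same color for all `i` modulo `l`. -/
def IsExchange {n : ℕ} (c : Sym2 (Fin n) → ℕ) (v u : Fin n) (l : ℕ)
    (x : ℕ → Fin n) : Prop :=
  0 < l ∧ (∀ i, i < l → x i ≠ u ∧ x i ≠ v) ∧
    (∀ i j, i < l → j < l → x i = x j → i = j) ∧
    (∀ i, i < l → c s(x i, u) = c s(v, x ((i + 1) % l)))

/-- The set `X(L) = {x₀, …, x_{l-1}}` of an exchange (or near exchange). -/
def ExchX {n : ℕ} (l : ℕ) (x : ℕ → Fin n) : Set (Fin n) := {y | ∃ i < l, x i = y}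

/-- An exchange is simplified if for each color class at most one `x_j` has
`v x_j` of that color. -/
def Simplified {n : ℕ} (c : Sym2 (Fin n) → ℕ) (v : Fin n) (l : ℕ)
    (x : ℕ → Fin n) : Prop :=
  ∀ i j, i < l → j < l → c s(v, x i) = c s(v, x j) → i = j

/-!
If `v x_i` and `v x_j` with `i < j` have the same color, delete `x_i, …, x_{j-1}` (or, when
`i = 0`, delete `x_j, …, x_{l-1}` instead, so that `x_0` survives). The one new pair of
consecutive edges is `x_{i-1} u, v x_j` (resp. `x_{j-1} u, v x_0`), and its colors agree because
`v x_i` and `v x_j` have the same color; so the shorter list is again an exchange. Induction on the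
length ends at a simplified exchange.
-/

/-- The `k`-th surviving index after the block `[i, i + d)` is deleted from `0, 1, 2, …`. -/
def skipBlock (i d k : ℕ) : ℕ := if k < i then k else k + d

section skipBlock

variable {i d k l : ℕ}

lemma skipBlock_injective : Function.Injective (skipBlock i d) := by
  intro a b h
  unfold skipBlock at h
  split_ifs at h <;> omega

lemma skipBlock_lt (hk : k < l - d) : skipBlock i d k < l := by
  unfold skipBlock
  split_ifs <;> omega

lemma skipBlock_zero (hi : 0 < i) : skipBlock i d 0 = 0 := if_pos hi

lemma skipBlock_succ (hk : k + 1 ≠ i) : skipBlock i d (k + 1) = skipBlock i d k + 1 := by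
  unfold skipBlock
  split_ifs <;> omega

lemma skipBlock_mod (hi : 0 < i) (hil : i + d ≤ l) (hm : k ≤ l - d) :
    skipBlock i d (k % (l - d)) = skipBlock i d k % l := by
  rcases hm.lt_or_eq with hm | rfl
  · rw [Nat.mod_eq_of_lt hm, Nat.mod_eq_of_lt (skipBlock_lt hm)]
  · have hl : skipBlock i d (l - d) = l := by unfold skipBlock; split_ifs <;> omega
    rw [Nat.mod_self, hl, Nat.mod_self, skipBlock_zero hi]

end skipBlock

section exchange

variable {n : ℕ} {c : Sym2 (Fin n) → ℕ} {v u : Fin n} {l : ℕ} {x : ℕ → Fin n}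

lemma exchX_comp_skipBlock_subset (i d : ℕ) : ExchX (l - d) (x ∘ skipBlock i d) ⊆ ExchX l x :=
  fun _ ⟨k, hk, hky⟩ => ⟨skipBlock i d k, skipBlock_lt hk, hky⟩

lemma IsExchange.comp_skipBlock (hx : IsExchange c v u l x) {i d : ℕ} (hi : 0 < i)
    (hil : i + d ≤ l) (hcol : c s(v, x i) = c s(v, x ((i + d) % l))) :
    IsExchange c v u (l - d) (x ∘ skipBlock i d) := by
  obtain ⟨-, hne, hinj, hsucc⟩ := hx
  refine ⟨by omega, fun k hk => hne _ (skipBlock_lt hk),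
    fun a b ha hb hab => skipBlock_injective (hinj _ _ (skipBlock_lt ha) (skipBlock_lt hb) hab),
    fun k hk => ?_⟩
  simp only [Function.comp_apply, skipBlock_mod hi hil (Nat.succ_le_of_lt hk)]
  rw [hsucc _ (skipBlock_lt hk)]
  by_cases hki : k + 1 = i
  · have hk' : skipBlock i d k = k := if_pos (show k < i by omega)
    have hjunction : skipBlock i d (k + 1) = i + d := by rw [hki]; exact if_neg (lt_irrefl i)
    rw [hk', hjunction, hki]
    rcases (show i < l ∨ d = 0 by omega) with hil' | rfl
    · rw [Nat.mod_eq_of_lt hil', hcol]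
    · rfl
  · rw [skipBlock_succ hki]

lemma exists_skipBlock_of_not_simplified (hns : ¬ Simplified c v l x) :
    ∃ i d, 0 < i ∧ 0 < d ∧ i + d ≤ l ∧ c s(v, x i) = c s(v, x ((i + d) % l)) := by
  simp only [Simplified, not_forall] at hns
  obtain ⟨i, j, hi, hj, hcol, hij⟩ := hns
  wlog hlt : i < j generalizing i j
  · exact this j i hj hi hcol.symm (Ne.symm hij) (by omega)
  rcases Nat.eq_zero_or_pos i with rfl | hi0
  · refine ⟨j, l - j, by omega, by omega, by omega, ?_⟩
    rw [Nat.add_sub_cancel' hj.le, Nat.mod_self, hcol]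
  · refine ⟨i, j - i, hi0, by omega, by omega, ?_⟩
    rwa [Nat.add_sub_cancel' hlt.le, Nat.mod_eq_of_lt hj]

lemma IsExchange.exists_shorter_of_not_simplified (hx : IsExchange c v u l x)
    (hns : ¬ Simplified c v l x) :
    ∃ l' < l, ∃ x', IsExchange c v u l' x' ∧ x' 0 = x 0 ∧ ExchX l' x' ⊆ ExchX l x := by
  obtain ⟨i, d, hi, hd, hil, hcol⟩ := exists_skipBlock_of_not_simplified hns
  exact ⟨l - d, by omega, x ∘ skipBlock i d, hx.comp_skipBlock hi hil hcol,
    congrArg x (skipBlock_zero hi), exchX_comp_skipBlock_subset i d⟩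

theorem IsExchange.exists_simplified (hx : IsExchange c v u l x) :
    ∃ l' x', IsExchange c v u l' x' ∧ x' 0 = x 0 ∧ Simplified c v l' x' ∧
      ExchX l' x' ⊆ ExchX l x := by
  induction l using Nat.strong_induction_on generalizing x with
  | _ l ih =>
    by_cases hs : Simplified c v l x
    · exact ⟨l, x, hx, rfl, hs, subset_rfl⟩
    obtain ⟨l', hl', x', hx', h0, hsub⟩ := hx.exists_shorter_of_not_simplified hs
    obtain ⟨l'', x'', hx'', h0', hs'', hsub'⟩ := ih l' hl' hx'
    exact ⟨l'', x'', hx'', h0'.trans h0, hs'', hsub'.trans hsub⟩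

end exchange

theorem exists_simplified_exchange_general
    (n : ℕ) (c : Sym2 (Fin n) → ℕ)
    (u v x0 : Fin n)
    (l : ℕ) (x : ℕ → Fin n)
    (hL : IsExchange c v u l x) (hL0 : x 0 = x0) :
    ∃ (l' : ℕ) (x' : ℕ → Fin n), IsExchange c v u l' x' ∧ x' 0 = x0 ∧
      Simplified c v l' x' ∧ ExchX l' x' ⊆ ExchX l x :=
  hL0 ▸ hL.exists_simplified

theorem exists_simplified_exchange
    (n t : ℕ) (c : Sym2 (Fin n) → ℕ)
    (hcol : ∀ e : Sym2 (Fin n), ¬ e.IsDiag → 1 ≤ c e ∧ c e ≤ t)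
    (hreg : ∀ j, 3 ≤ j → j ≤ t → ∃ r, (Hc c j).IsRegularOfDegree r)
    (u v x0 : Fin n)
    (h1 : (Hc c 1).Adj v x0)
    (h2 : ¬ (Hc c 1).Adj x0 u) (hx0u : x0 ≠ u)
    (l : ℕ) (x : ℕ → Fin n)
    (hL : IsExchange c v u l x) (hL0 : x 0 = x0) :
    ∃ (l' : ℕ) (x' : ℕ → Fin n), IsExchange c v u l' x' ∧ x' 0 = x0 ∧
      Simplified c v l' x' ∧ ExchX l' x' ⊆ ExchX l x :=
  exists_simplified_exchange_general n c u v x0 l x hL hL0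
end

section
/- Color the edges of K_n with colors 1,…,t giving subgraphs H_1,…,H_t with H_j regular for all j ≥ 3. Let v x_0 ∈ E(H_1) and x_0 u ∉ E(H_1). If there exists a vertex y ∈ N_{H_2}(v) ∩ N_{H_1}(u), or there exist y ∈ N_{H_2}(v) − N_{H_2}(u) and y' ∈ N_{H_1}(u) − N_{H_1}(v) such that the edges y u and v y' have the same color, then v x_0 and x_0 u can be exchanged (there exists an exchange list for them). -/
/-!
Grow a path `v x₀, x₀ u, v x₁, x₁ u, …` in which `v x_{k+1}` gets the color of `x_k u`.
While that color `j` is at least `3`, the graph `H_j` is regular and, among `u, v, x₀, …, xᵢ`,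
the vertex `v` has fewer `H_j`-neighbours than `u`: an `H_j`-neighbour `x_{k+1}` of `v` pairs
with the `H_j`-neighbour `x_k` of `u`, a neighbour `u` of `v` with the neighbour `v` of `u`,
and `xᵢ` is left over. So `v` has an `H_j`-neighbour off the path, which becomes `x_{i+1}`.
As `K_n` is finite, the growth stops at an edge `xᵢ u` of color `1` or `2`. Color `1` closes
the exchange at once; after color `2` the vertex `y` (followed by `y'` in the second
alternative) closes it.
-/

open SimpleGraph

attribute [local instance] Classical.propDecidable

open Finset

theorem SimpleGraph.IsRegularOfDegree.exists_adj_notMem_of_card_filter_lt {V : Type*}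
    [Fintype V] [DecidableEq V] {G : SimpleGraph V} [DecidableRel G.Adj] {r : ℕ}
    (hG : G.IsRegularOfDegree r) {u v : V} {S : Finset V} (hv : v ∉ S)
    (h : #{w ∈ S | G.Adj v w} < #{w ∈ S | G.Adj u w}) :
    ∃ z, G.Adj v z ∧ z ∉ S ∧ z ≠ u := by
  by_contra! hS
  have hv_le : r ≤ #{w ∈ S | G.Adj v w} + if G.Adj v u then 1 else 0 := by
    rw [← hG v]
    split_ifs with hvu
    · refine (card_le_card fun w hw => ?_).trans (card_insert_le u _)
      rw [mem_neighborFinset] at hw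
      by_cases hwu : w = u
      · exact mem_insert.mpr (Or.inl hwu)
      · exact mem_insert_of_mem (mem_filter.mpr ⟨not_not.mp fun h => hwu (hS w hw h), hw⟩)
    · refine card_le_card fun w hw => ?_
      rw [mem_neighborFinset] at hw
      have hwu : w ≠ u := by rintro rfl; exact hvu hw
      exact mem_filter.mpr ⟨not_not.mp fun h => hwu (hS w hw h), hw⟩
  have hu_le : #{w ∈ S | G.Adj u w} + (if G.Adj v u then 1 else 0) ≤ r := by
    rw [← hG u]
    split_ifs with hvu
    · rw [← card_insert_of_notMem fun h => hv (mem_filter.mp h).1]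
      refine card_le_card fun w hw => ?_
      rcases mem_insert.mp hw with rfl | hw
      · simpa using hvu.symm
      · simpa using (mem_filter.mp hw).2
    · exact card_le_card fun w hw => by simpa using (mem_filter.mp hw).2
  omega

variable {n : ℕ} {c : Sym2 (Fin n) → ℕ}

theorem Hc_adj_iff {j : ℕ} {a b : Fin n} : (Hc c j).Adj a b ↔ a ≠ b ∧ c s(a, b) = j := Iff.rfl

structure IsNearExchange (c : Sym2 (Fin n) → ℕ) (v u : Fin n) (i : ℕ) (x : ℕ → Fin n) :
    Prop where
  ne_u : ∀ k ≤ i, x k ≠ u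
  ne_v : ∀ k ≤ i, x k ≠ v
  injOn : Set.InjOn x (Set.Iic i)
  color_eq : ∀ k < i, c s(x k, u) = c s(v, x (k + 1))

namespace IsNearExchange

variable {u v : Fin n} {i : ℕ} {x : ℕ → Fin n}

theorem last_lt (hx : IsNearExchange c v u i x) : i < n := by
  have := Fintype.card_le_of_injective (fun k : Fin (i + 1) => x k) fun a b hab =>
    Fin.ext (hx.injOn (Set.mem_Iic.mpr (Nat.le_of_lt_succ a.2))
      (Set.mem_Iic.mpr (Nat.le_of_lt_succ b.2)) hab)
  simpa using this

theorem not_isDiag (hx : IsNearExchange c v u i x) {k : ℕ} (hk : k ≤ i) :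
    ¬ s(x k, u).IsDiag :=
  Sym2.mk_isDiag_iff.not.mpr (hx.ne_u k hk)

theorem isExchange (hx : IsNearExchange c v u i x) (hclose : c s(x i, u) = c s(v, x 0)) :
    IsExchange c v u (i + 1) x := by
  refine ⟨i.succ_pos, fun k hk => ⟨hx.ne_u k (by omega), hx.ne_v k (by omega)⟩,
    fun k l hk hl hkl => hx.injOn (Set.mem_Iic.mpr (by omega)) (Set.mem_Iic.mpr (by omega)) hkl,
    fun k hk => ?_⟩
  rcases Nat.lt_or_ge k i with hki | hki
  · rw [Nat.mod_eq_of_lt (by omega : k + 1 < i + 1)]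
    exact hx.color_eq k hki
  · rw [show k = i by omega, Nat.mod_self]
    exact hclose

theorem snoc (hx : IsNearExchange c v u i x) {z : Fin n} (hzu : z ≠ u) (hzv : z ≠ v)
    (hz : ∀ k ≤ i, x k ≠ z) (hcolor : c s(x i, u) = c s(v, z)) :
    IsNearExchange c v u (i + 1) (Function.update x (i + 1) z) := by
  have hlow : ∀ k ≤ i, Function.update x (i + 1) z k = x k := fun k hk =>
    Function.update_of_ne (by omega) _ _
  have hcases : ∀ k ≤ i + 1, k ≤ i ∨ k = i + 1 := fun k hk => by omega
  refine ⟨fun k hk => ?_, fun k hk => ?_, fun k hk l hl hkl => ?_, fun k hk => ?_⟩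
  · rcases hcases k hk with hk | rfl
    · rw [hlow k hk]; exact hx.ne_u k hk
    · simpa using hzu
  · rcases hcases k hk with hk | rfl
    · rw [hlow k hk]; exact hx.ne_v k hk
    · simpa using hzv
  · rcases hcases k hk with hk | rfl <;> rcases hcases l hl with hl | rfl
    · rw [hlow k hk, hlow l hl] at hkl
      exact hx.injOn hk hl hkl
    · rw [hlow k hk, Function.update_self] at hkl
      exact absurd hkl (hz k hk)
    · rw [hlow l hl, Function.update_self] at hkl
      exact absurd hkl.symm (hz l hl)
    · rfl
  · rw [hlow k (by omega)]
    rcases Nat.lt_or_ge k i with hki | hki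
    · rw [hlow (k + 1) hki]; exact hx.color_eq k hki
    · rw [show k = i by omega, Function.update_self]; exact hcolor

theorem exists_fresh_adj (hx : IsNearExchange c v u i x) {j r : ℕ}
    (hr : (Hc c j).IsRegularOfDegree r) (hxi : c s(x i, u) = j) (hx0 : c s(v, x 0) ≠ j) :
    ∃ z, (Hc c j).Adj v z ∧ z ≠ u ∧ ∀ k ≤ i, x k ≠ z := by
  set X := (range (i + 1)).image x
  have hinj : Set.InjOn x (range (i + 1)) := by
    rw [Nat.range_succ_eq_Iic, coe_Iic]; exact hx.injOn
  have hcard : ∀ p : Fin n → Prop, #{w ∈ X | p w} = #{k ∈ range (i + 1) | p (x k)} := fun p => by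
    rw [filter_image, card_image_of_injOn (hinj.mono (filter_subset _ _))]
  have hvX : v ∉ X := by
    simp only [X, mem_image, mem_range, not_exists, not_and]
    exact fun k hk => hx.ne_v k (by omega)
  have hadj_v : ∀ k ≤ i, (Hc c j).Adj v (x k) ↔ c s(v, x k) = j := fun k hk =>
    and_iff_right (hx.ne_v k hk).symm
  have hadj_u : ∀ k ≤ i, (Hc c j).Adj u (x k) ↔ c s(x k, u) = j := fun k hk => by
    rw [Hc_adj_iff, Sym2.eq_swap]; exact and_iff_right (hx.ne_u k hk).symm
  -- `v x_{k+1}` has the color of `x_k u`, and `v x₀` does not have color `j` while `xᵢ u` does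
  have hv : #{k ∈ range (i + 1) | (Hc c j).Adj v (x k)} = #{k ∈ range i | c s(x k, u) = j} := by
    rw [card_filter, card_filter, sum_range_succ', if_neg ((hadj_v 0 i.zero_le).not.mpr hx0),
      add_zero]
    refine sum_congr rfl fun k hk => ?_
    have hki := mem_range.mp hk
    simp only [hadj_v (k + 1) hki, hx.color_eq k hki]
  have hu : #{k ∈ range (i + 1) | (Hc c j).Adj u (x k)} =
      #{k ∈ range i | c s(x k, u) = j} + 1 := by
    rw [card_filter, card_filter, sum_range_succ, if_pos ((hadj_u i le_rfl).mpr hxi)]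
    refine congrArg (· + 1) (sum_congr rfl fun k hk => ?_)
    simp only [hadj_u k (mem_range.mp hk).le]
  obtain ⟨z, hvz, hzX, hzu⟩ := hr.exists_adj_notMem_of_card_filter_lt (u := u) hvX (by
    rw [hcard, hcard, hv, hu]; omega)
  exact ⟨z, hvz, hzu, fun k hk hkz => hzX (mem_image.mpr ⟨k, mem_range.mpr (by omega), hkz⟩)⟩

end IsNearExchange

/-- A near exchange starting with an edge `v x₀` of color `1` in which every edge `x_k u`
before the last one has a color `≥ 3`, i.e. lies in one of the regular graphs `H_j`. -/
structure IsGreedyChain (c : Sym2 (Fin n) → ℕ) (v u : Fin n) (i : ℕ) (x : ℕ → Fin n) : Prop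
    extends IsNearExchange c v u i x where
  color_zero : c s(v, x 0) = 1
  three_le : ∀ k < i, 3 ≤ c s(x k, u)

namespace IsGreedyChain

variable {u v : Fin n} {i : ℕ} {x : ℕ → Fin n}

theorem snoc (hx : IsGreedyChain c v u i x) {z : Fin n} (hzu : z ≠ u) (hzv : z ≠ v)
    (hz : ∀ k ≤ i, x k ≠ z) (hcolor : c s(x i, u) = c s(v, z)) (hi : 3 ≤ c s(x i, u)) :
    IsGreedyChain c v u (i + 1) (Function.update x (i + 1) z) where
  toIsNearExchange := hx.toIsNearExchange.snoc hzu hzv hz hcolor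
  color_zero := by rw [Function.update_of_ne i.succ_ne_zero.symm]; exact hx.color_zero
  three_le k hk := by
    rw [Function.update_of_ne (by omega)]
    rcases Nat.lt_or_ge k i with hki | hki
    · exact hx.three_le k hki
    · rwa [show k = i by omega]

theorem ne_of_color_left_eq_two (hx : IsGreedyChain c v u i x) {w : Fin n}
    (hw : c s(v, w) = 2) : ∀ k ≤ i, x k ≠ w := by
  rintro (_ | k) hk rfl
  · rw [hx.color_zero] at hw; omega
  · have := hx.three_le k (by omega)
    rw [hx.color_eq k (by omega), hw] at this; omega

theorem ne_of_color_right_lt_three (hx : IsGreedyChain c v u i x) {w : Fin n}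
    (hw : c s(w, u) < 3) (hi : c s(x i, u) ≠ c s(w, u)) : ∀ k ≤ i, x k ≠ w := by
  rintro k hk rfl
  rcases Nat.lt_or_ge k i with hki | hki
  · have := hx.three_le k hki; omega
  · exact hi (by rw [show k = i by omega])

theorem exists_isExchange_snoc (hx : IsGreedyChain c v u i x) (htwo : c s(x i, u) = 2)
    {y : Fin n} (hvy : c s(v, y) = 2) (hyu : y ≠ u) (hyv : y ≠ v) (hy : c s(y, u) = 1) :
    ∃ l x', IsExchange c v u l x' ∧ x' 0 = x 0 := by
  have hx' := hx.toIsNearExchange.snoc hyu hyv (hx.ne_of_color_left_eq_two hvy)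
    (htwo.trans hvy.symm)
  refine ⟨_, _, hx'.isExchange ?_, ?_⟩ <;> simp [hy, hx.color_zero]

theorem exists_isExchange_snoc_snoc (hx : IsGreedyChain c v u i x)
    (htwo : c s(x i, u) = 2) {y y' : Fin n} (hvy : c s(v, y) = 2) (hyu : y ≠ u) (hyv : y ≠ v)
    (hy : c s(y, u) ≠ 2) (hvy' : c s(y, u) = c s(v, y')) (hy'u : y' ≠ u) (hy'v : y' ≠ v)
    (hy' : c s(y', u) = 1) :
    ∃ l x', IsExchange c v u l x' ∧ x' 0 = x 0 := by
  have hx' := hx.toIsNearExchange.snoc hyu hyv (hx.ne_of_color_left_eq_two hvy)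
    (htwo.trans hvy.symm)
  have hyy' : y ≠ y' := by rintro rfl; exact hy (hvy' ▸ hvy)
  have hfresh : ∀ k ≤ i + 1, Function.update x (i + 1) y k ≠ y' := by
    intro k hk
    rcases Nat.lt_or_ge k (i + 1) with hki | hki
    · rw [Function.update_of_ne (by omega)]
      exact hx.ne_of_color_right_lt_three (by omega) (by omega) k (by omega)
    · rwa [show k = i + 1 by omega, Function.update_self]
  have hx'' := hx'.snoc hy'u hy'v hfresh (by rwa [Function.update_self])
  refine ⟨_, _, hx''.isExchange ?_, ?_⟩ <;> simp [hy', hx.color_zero]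

end IsGreedyChain

theorem exists_isGreedyChain {t : ℕ} (hcol : ∀ e : Sym2 (Fin n), ¬ e.IsDiag → 1 ≤ c e ∧ c e ≤ t)
    (hreg : ∀ j, 3 ≤ j → j ≤ t → ∃ r, (Hc c j).IsRegularOfDegree r)
    {u v x0 : Fin n} (hvx0 : c s(v, x0) = 1) (hx0u : x0 ≠ u) (hx0v : x0 ≠ v) :
    ∃ i x, IsGreedyChain c v u i x ∧ x 0 = x0 ∧ c s(x i, u) < 3 := by
  by_contra! hlong
  -- otherwise the greedy chain can be extended forever, which the pigeonhole principle forbids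
  have hgrow : ∀ m, ∃ x, IsGreedyChain c v u m x ∧ x 0 = x0 := by
    intro m
    induction m with
    | zero =>
      exact ⟨fun _ => x0, ⟨⟨fun _ _ => hx0u, fun _ _ => hx0v, fun _ _ _ _ _ => by simp_all,
        fun _ h => absurd h (Nat.not_lt_zero _)⟩, hvx0, fun _ h => absurd h (Nat.not_lt_zero _)⟩,
        rfl⟩
    | succ m ih =>
      obtain ⟨x, hx, hx0⟩ := ih
      have h3 := hlong m x hx hx0
      obtain ⟨r, hr⟩ := hreg _ h3 (hcol _ (hx.not_isDiag le_rfl)).2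
      obtain ⟨z, hvz, hzu, hz⟩ := hx.exists_fresh_adj hr rfl (by rw [hx.color_zero]; omega)
      exact ⟨_, hx.snoc hzu hvz.ne.symm hz hvz.2.symm h3, by simpa using hx0⟩
  obtain ⟨x, hx, -⟩ := hgrow n
  exact lt_irrefl n hx.last_lt

theorem guarantee_exchange_general
    (n t : ℕ) (c : Sym2 (Fin n) → ℕ)
    (hcol : ∀ e : Sym2 (Fin n), ¬ e.IsDiag → 1 ≤ c e ∧ c e ≤ t)
    (hreg : ∀ j, 3 ≤ j → j ≤ t → ∃ r, (Hc c j).IsRegularOfDegree r)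
    (u v x0 : Fin n)
    (h1 : (Hc c 1).Adj v x0)
    (hx0u : x0 ≠ u)
    (hy : (∃ y, (Hc c 2).Adj v y ∧ (Hc c 1).Adj u y) ∨
      (∃ y y', (Hc c 2).Adj v y ∧ ¬ (Hc c 2).Adj u y ∧ y ≠ u ∧
        (Hc c 1).Adj u y' ∧ ¬ (Hc c 1).Adj v y' ∧ y' ≠ v ∧
        c s(y, u) = c s(v, y'))) :
    ∃ (l : ℕ) (x : ℕ → Fin n), IsExchange c v u l x ∧ x 0 = x0 := by
  obtain ⟨i, x, hx, rfl, hlast⟩ := exists_isGreedyChain hcol hreg h1.2 hx0u h1.ne.symm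
  obtain hone | htwo : c s(x i, u) = 1 ∨ c s(x i, u) = 2 := by
    have := (hcol _ (hx.not_isDiag le_rfl)).1; omega
  · exact ⟨_, _, hx.isExchange (hone.trans hx.color_zero.symm), rfl⟩
  rcases hy with ⟨y, hvy, huy⟩ | ⟨y, y', hvy, huy, hyu, huy', -, hy'v, hyy'⟩
  · exact hx.exists_isExchange_snoc htwo hvy.2 huy.ne.symm hvy.ne.symm
      (by rw [Sym2.eq_swap]; exact huy.2)
  by_cases hy1 : c s(y, u) = 1
  · exact hx.exists_isExchange_snoc htwo hvy.2 hyu hvy.ne.symm hy1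
  · exact hx.exists_isExchange_snoc_snoc htwo hvy.2 hyu hvy.ne.symm
      (fun h => huy ⟨hyu.symm, by rwa [Sym2.eq_swap]⟩) hyy' huy'.ne.symm hy'v
      (by rw [Sym2.eq_swap]; exact huy'.2)

theorem guarantee_exchange
    (n t : ℕ) (c : Sym2 (Fin n) → ℕ)
    (hcol : ∀ e : Sym2 (Fin n), ¬ e.IsDiag → 1 ≤ c e ∧ c e ≤ t)
    (hreg : ∀ j, 3 ≤ j → j ≤ t → ∃ r, (Hc c j).IsRegularOfDegree r)
    (u v x0 : Fin n)
    (h1 : (Hc c 1).Adj v x0)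
    (h2 : ¬ (Hc c 1).Adj x0 u) (hx0u : x0 ≠ u)
    (hy : (∃ y, (Hc c 2).Adj v y ∧ (Hc c 1).Adj u y) ∨
      (∃ y y', (Hc c 2).Adj v y ∧ ¬ (Hc c 2).Adj u y ∧ y ≠ u ∧
        (Hc c 1).Adj u y' ∧ ¬ (Hc c 1).Adj v y' ∧ y' ≠ v ∧
        c s(y, u) = c s(v, y'))) :
    ∃ (l : ℕ) (x : ℕ → Fin n), IsExchange c v u l x ∧ x 0 = x0 :=
  guarantee_exchange_general n t c hcol hreg u v x0 h1 hx0u hy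
end

section
/- Let F_0 be a k'-regular graph and let X, Y partition the vertex set of an odd-order component D_i of F_0 minus a set J_i of l_i edges such that X and Y are independent sets in D_i − J_i, no edge of J_i joins X and Y, and |X| ≥ |Y| + 1. Let S be a set of vertices outside D_i, let w_i = |V(J_i) ∩ X| and w'_i = |V(J_i) ∩ Y|, with l_i = w_i + w'_i, and suppose every edge of F_0 incident to D_i other than edges inside D_i goes to S. Then k' − 2 l_i − e_{F_0}(X, S) ≤ 0, i.e., e_{F_0}(X, S) ≥ k' − 2 l_i. -/
open SimpleGraph Finset

attribute [local instance] Classical.propDecidable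

theorem edge_count_from_X_to_S
    {V : Type*} [Fintype V] [DecidableEq V]
    (F0 : SimpleGraph V) (k' l w w' : ℕ)
    (X Y S : Finset V) (J : Finset (Sym2 V))
    (hreg : F0.IsRegularOfDegree k')
    (hXY : Disjoint X Y) (hXS : Disjoint X S) (hYS : Disjoint Y S)
    -- `D_i = X ∪ Y` is an odd-order component
    (hodd : Odd (X.card + Y.card))
    (hcard : Y.card + 1 ≤ X.card)
    -- `J` is a set of `l` edges of `F0`,
    (hJ : ∀ e ∈ J, e ∈ F0.edgeSet)
    (hJcard : J.card = l)
    -- each edge of `J` lies within `X` or within `Y`,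
    (hJin : ∀ e ∈ J, (∀ z ∈ e, z ∈ X) ∨ (∀ z ∈ e, z ∈ Y))
    -- removing `J` makes `X` and `Y` independent,
    (hindep : ∀ a b, F0.Adj a b →
      ((a ∈ X ∧ b ∈ X) ∨ (a ∈ Y ∧ b ∈ Y)) → s(a, b) ∈ J)
    -- all `F0`-edges leaving `X ∪ Y` land in `S`,
    (hleave : ∀ a ∈ X ∪ Y, ∀ b, F0.Adj a b → b ∈ X ∪ Y ∪ S)
    -- `w = |V(J) ∩ X|`, `w' = |V(J) ∩ Y|`, and `l = w + w'`.
    (hw : w = (X.filter fun z => ∃ e ∈ J, z ∈ e).card)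
    (hw' : w' = (Y.filter fun z => ∃ e ∈ J, z ∈ e).card)
    (hlww : l = w + w') :
    (k' : ℤ) - 2 * l ≤
      (((X ×ˢ S).filter fun p => F0.Adj p.1 p.2).card : ℤ) := by
  classical
  set f : V → V → ℕ := fun x y => if F0.Adj x y then 1 else 0 with hf
  have hsumT : ∀ (x : V) (T : Finset V), ∑ y ∈ T, f x y = (T.filter (F0.Adj x)).card := by
    intro x T
    rw [Finset.card_filter]
  have hC : (((X ×ˢ S).filter fun p => F0.Adj p.1 p.2).card)
      = ∑ x ∈ X, ∑ y ∈ S, f x y := by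
    rw [Finset.card_filter, Finset.sum_product]
  have hAeq : (((X ×ˢ X).filter fun p => F0.Adj p.1 p.2).card)
      = ∑ x ∈ X, ∑ y ∈ X, f x y := by
    rw [Finset.card_filter, Finset.sum_product]
  -- degree decomposition for x ∈ X
  have hdeg : ∀ x ∈ X,
      (∑ y ∈ X, f x y) + (∑ y ∈ Y, f x y) + (∑ y ∈ S, f x y) = k' := by
    intro x hx
    have hsub : F0.neighborFinset x ⊆ X ∪ Y ∪ S := by
      intro y hy
      rw [mem_neighborFinset] at hy
      exact hleave x (mem_union_left _ hx) y hy
    have key : ((X ∪ Y ∪ S).filter (F0.Adj x)) = F0.neighborFinset x := by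
      ext y
      simp only [mem_filter, mem_neighborFinset]
      constructor
      · exact fun h => h.2
      · intro h
        exact ⟨hsub (by rwa [mem_neighborFinset]), h⟩
    have hd1 : Disjoint (X ∪ Y) S := Finset.disjoint_union_left.2 ⟨hXS, hYS⟩
    have hcardsplit : ((X ∪ Y ∪ S).filter (F0.Adj x)).card
        = (X.filter (F0.Adj x)).card + (Y.filter (F0.Adj x)).card
          + (S.filter (F0.Adj x)).card := by
      rw [Finset.filter_union,
        Finset.card_union_of_disjoint (Finset.disjoint_filter_filter hd1),
        Finset.filter_union,
        Finset.card_union_of_disjoint (Finset.disjoint_filter_filter hXY)]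
    have := hreg x
    rw [hsumT, hsumT, hsumT, ← hcardsplit, key, card_neighborFinset_eq_degree, this]
  have hsum : (∑ x ∈ X, ∑ y ∈ X, f x y) + (∑ x ∈ X, ∑ y ∈ Y, f x y)
      + (∑ x ∈ X, ∑ y ∈ S, f x y) = k' * X.card := by
    rw [← Finset.sum_add_distrib, ← Finset.sum_add_distrib]
    rw [Finset.sum_congr rfl hdeg]
    simp [mul_comm]
  -- bound edges within X by 2l
  have hA : (∑ x ∈ X, ∑ y ∈ X, f x y) ≤ 2 * l := by
    rw [← hAeq]
    have hsubJ : ((X ×ˢ X).filter fun p => F0.Adj p.1 p.2).image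
        (fun p => s(p.1, p.2)) ⊆ J := by
      intro e he
      simp only [Finset.mem_image] at he
      obtain ⟨⟨a, b⟩, hp, rfl⟩ := he
      simp only [Finset.mem_filter, Finset.mem_product] at hp
      exact hindep a b hp.2 (Or.inl ⟨hp.1.1, hp.1.2⟩)
    have hfib : ∀ e ∈ ((X ×ˢ X).filter fun p => F0.Adj p.1 p.2).image
        (fun p => s(p.1, p.2)),
        (((X ×ˢ X).filter fun p => F0.Adj p.1 p.2).filter
          (fun p => s(p.1, p.2) = e)).card ≤ 2 := by
      intro e _
      induction e using Sym2.inductionOn with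
      | hf a b =>
        have : (((X ×ˢ X).filter fun p => F0.Adj p.1 p.2).filter
            (fun p => s(p.1, p.2) = s(a, b))) ⊆ {(a, b), (b, a)} := by
          intro p hp
          simp only [Finset.mem_filter] at hp
          have := hp.2
          rw [Sym2.eq_iff] at this
          simp only [Finset.mem_insert, Finset.mem_singleton]
          rcases this with ⟨h1, h2⟩ | ⟨h1, h2⟩
          · left; exact Prod.ext h1 h2
          · right; exact Prod.ext h1 h2
        calc _ ≤ ({(a, b), (b, a)} : Finset (V × V)).card := Finset.card_le_card this
          _ ≤ 2 := Finset.card_insert_le _ _ |>.trans (by simp)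
    calc ((X ×ˢ X).filter fun p => F0.Adj p.1 p.2).card
        ≤ 2 * (((X ×ˢ X).filter fun p => F0.Adj p.1 p.2).image
            (fun p => s(p.1, p.2))).card := Finset.card_le_mul_card_image _ 2 hfib
      _ ≤ 2 * J.card := by
          exact Nat.mul_le_mul_left 2 (Finset.card_le_card hsubJ)
      _ = 2 * l := by rw [hJcard]
  -- bound edges from X to Y by k' * |Y|
  have hB : (∑ x ∈ X, ∑ y ∈ Y, f x y) ≤ k' * Y.card := by
    rw [Finset.sum_comm]
    have hin : ∀ y ∈ Y, (∑ x ∈ X, f x y) ≤ k' := by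
      intro y _
      have : (∑ x ∈ X, f x y) = (X.filter (fun x => F0.Adj x y)).card := by
        rw [Finset.card_filter]
      rw [this]
      have hsub : X.filter (fun x => F0.Adj x y) ⊆ F0.neighborFinset y := by
        intro x hx
        simp only [Finset.mem_filter] at hx
        rw [mem_neighborFinset]
        exact hx.2.symm
      calc (X.filter (fun x => F0.Adj x y)).card
          ≤ (F0.neighborFinset y).card := Finset.card_le_card hsub
        _ = k' := by rw [card_neighborFinset_eq_degree, hreg y]
    calc (∑ y ∈ Y, ∑ x ∈ X, f x y) ≤ ∑ _y ∈ Y, k' := Finset.sum_le_sum hin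
      _ = k' * Y.card := by rw [Finset.sum_const, smul_eq_mul, mul_comm]
  have hM : k' * (Y.card + 1) ≤ k' * X.card := Nat.mul_le_mul_left _ hcard
  rw [hC]
  have hM' : k' * Y.card + k' ≤ k' * X.card := by
    rw [Nat.mul_add, Nat.mul_one] at hM; exact hM
  omega
end
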